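/- arXiv:2404.06313 — 2 statements merged into one kernel-verified Lean document; each statement's English description precedes it below -/
import Mathlib

section
/- Let A and B be nonempty subsets of ℝ^n with inf_{a∈A, b∈B} ‖a−b‖₂ = d₀ > 0, and let x ∈ ℝ^n be a test point from class A such that dist₂(x, A_N) → 0 as N → ∞, where A_N ⊆ A are the training samples of class A among the first N samples, and all class-B training points lie in B. Then for every ε < d₀/2, there exists N₀ such that for all N ≥ N₀, every perturbation v with ‖v‖₂ < ε leaves x + v closer to A_N than to any class-B training point; i.e., the 1NN classifier is asymptotically robust at x with ℓ2 radius up to d₀/2. -/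
/-! Moving the test point `x` by less than `ε` changes each nearest-neighbour distance by less
than `ε` (`infDist` is 1-Lipschitz). The class-`B` points stay at distance `≥ d₀` from `x`, hence
`> d₀ - ε` from the perturbed point, while the class-`A` training distance at `x` eventually drops
below `d₀ - 2ε`, leaving the perturbed point within `d₀ - ε` of `A_N`. -/

open Filter Metric

section

variable {α : Type*} [PseudoMetricSpace α]

theorem sub_dist_le_infDist_of_forall_le_dist {t : Set α} (ht : t.Nonempty) {x y : α} {d : ℝ}
    (h : ∀ b ∈ t, d ≤ dist x b) : d - dist y x ≤ infDist y t := by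
  have hx : d ≤ infDist x t := (le_infDist ht).2 h
  linarith [infDist_le_infDist_add_dist (x := x) (y := y) (s := t), dist_comm x y]

theorem infDist_lt_infDist_of_dist_lt {s t : Set α} (ht : t.Nonempty) {x y : α} {d ε : ℝ}
    (hsep : ∀ b ∈ t, d ≤ dist x b) (hs : infDist x s < d - 2 * ε) (hy : dist y x < ε) :
    infDist y s < infDist y t := by
  have hs_y : infDist y s ≤ infDist x s + dist y x := infDist_le_infDist_add_dist
  have ht_y := sub_dist_le_infDist_of_forall_le_dist ht (y := y) hsep
  linarith

theorem eventually_forall_dist_lt_infDist_lt_infDist {s t : ℕ → Set α} {x : α} {d ε : ℝ}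
    (ht : ∀ N, (t N).Nonempty) (hsep : ∀ N, ∀ b ∈ t N, d ≤ dist x b)
    (hs : Tendsto (fun N => infDist x (s N)) atTop (nhds 0)) (hε : ε < d / 2) :
    ∃ N₀, ∀ N ≥ N₀, ∀ y, dist y x < ε → infDist y (s N) < infDist y (t N) := by
  obtain ⟨N₀, hN₀⟩ := eventually_atTop.1 <| hs.eventually <| eventually_lt_nhds
    (show (0 : ℝ) < d - 2 * ε by linarith)
  exact ⟨N₀, fun N hN _ hy => infDist_lt_infDist_of_dist_lt (ht N) (hsep N) (hN₀ N hN) hy⟩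

end

theorem stmt_8_general {n : ℕ} (A B : Set (EuclideanSpace ℝ (Fin n)))
    (d₀ : ℝ)
    (hsep : ∀ a ∈ A, ∀ b ∈ B, d₀ ≤ dist a b)
    (x : EuclideanSpace ℝ (Fin n)) (hx : x ∈ A)
    (A_N B_N : ℕ → Set (EuclideanSpace ℝ (Fin n)))
    (hBN : ∀ N, B_N N ⊆ B)
    (hBNne : ∀ N, (B_N N).Nonempty)
    (hconv : Filter.Tendsto (fun N => Metric.infDist x (A_N N))
      Filter.atTop (nhds 0)) :
    ∀ ε : ℝ, 0 < ε → ε < d₀ / 2 →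
      ∃ N₀ : ℕ, ∀ N ≥ N₀, ∀ v : EuclideanSpace ℝ (Fin n), ‖v‖ < ε →
        Metric.infDist (x + v) (A_N N) < Metric.infDist (x + v) (B_N N) := by
  intro ε _ hε
  obtain ⟨N₀, hN₀⟩ := eventually_forall_dist_lt_infDist_lt_infDist hBNne
    (fun N b hb => hsep x hx b (hBN N hb)) hconv hε
  exact ⟨N₀, fun N hN v hv => hN₀ N hN (x + v) (by rwa [dist_self_add_left])⟩

/-- Asymptotic robustness of 1NN at a test point: if the class supports `A`,
`B` are separated by `d₀ > 0`, the test point `x ∈ A` has nearest-neighbor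
distance to the class-`A` training samples `A_N` tending to `0`, and the
class-`B` training points all lie in `B`, then for every radius `ε < d₀/2`,
eventually every ℓ2-perturbation of `x` of norm `< ε` is classified correctly. -/
theorem stmt_8 {n : ℕ} (A B : Set (EuclideanSpace ℝ (Fin n)))
    (hAne : A.Nonempty) (hBne : B.Nonempty)
    (d₀ : ℝ) (hd₀ : 0 < d₀)
    (hsep : ∀ a ∈ A, ∀ b ∈ B, d₀ ≤ dist a b)
    (x : EuclideanSpace ℝ (Fin n)) (hx : x ∈ A)
    (A_N B_N : ℕ → Set (EuclideanSpace ℝ (Fin n)))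
    (hAN : ∀ N, A_N N ⊆ A) (hBN : ∀ N, B_N N ⊆ B)
    (hBNne : ∀ N, (B_N N).Nonempty)
    (hconv : Filter.Tendsto (fun N => Metric.infDist x (A_N N))
      Filter.atTop (nhds 0)) :
    ∀ ε : ℝ, 0 < ε → ε < d₀ / 2 →
      ∃ N₀ : ℕ, ∀ N ≥ N₀, ∀ v : EuclideanSpace ℝ (Fin n), ‖v‖ < ε →
        Metric.infDist (x + v) (A_N N) < Metric.infDist (x + v) (B_N N) :=
  stmt_8_general A B d₀ hsep x hx A_N B_N hBN hBNne hconv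
end

section
/- In ℝ^n with n ≥ 1, suppose the binary 1NN classifier has training sets A and B with ℓ2 class distance d₀ > 0. Then the decision boundary {x : dist₂(x, A) = dist₂(x, B)} has ℓ2 distance at least d₀/2 from every training point. -/
open Metric

theorem half_le_dist_of_infDist_eq {α : Type*} [PseudoMetricSpace α] {s u : Set α} {x t : α}
    {d : ℝ} (hu : u.Nonempty) (ht : t ∈ s) (hsep : ∀ v ∈ u, d ≤ dist t v)
    (heq : infDist x s = infDist x u) : d / 2 ≤ dist x t := by
  have : d ≤ 2 * dist x t :=
    calc d ≤ infDist t u := (le_infDist hu).2 hsep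
      _ ≤ infDist x u + dist t x := infDist_le_infDist_add_dist
      _ = infDist x s + dist x t := by rw [heq, dist_comm]
      _ ≤ dist x t + dist x t := by gcongr; exact infDist_le_dist_of_mem ht
      _ = 2 * dist x t := by ring
  linarith

theorem stmt_10_general {n : ℕ}
    (A B : Set (EuclideanSpace ℝ (Fin n)))
    (hAne : A.Nonempty) (hBne : B.Nonempty)
    (d₀ : ℝ)
    (hsep : ∀ a ∈ A, ∀ b ∈ B, d₀ ≤ dist a b) :
    ∀ x : EuclideanSpace ℝ (Fin n),
      Metric.infDist x A = Metric.infDist x B →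
      ∀ t ∈ A ∪ B, d₀ / 2 ≤ dist x t := by
  rintro x hx t (htA | htB)
  · exact half_le_dist_of_infDist_eq hBne htA (hsep t htA) hx
  · exact half_le_dist_of_infDist_eq hAne htB
      (fun a ha => dist_comm t a ▸ hsep a ha t htB) hx.symm

/-- The 1NN decision boundary `{x : dist₂(x,A) = dist₂(x,B)}` lies at ℓ2
distance at least `d₀/2` from every training point, where `d₀ > 0` is the ℓ2
class distance. -/
theorem stmt_10 {n : ℕ} (hn : 1 ≤ n)
    (A B : Set (EuclideanSpace ℝ (Fin n)))
    (hA : A.Finite) (hB : B.Finite) (hAne : A.Nonempty) (hBne : B.Nonempty)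
    (d₀ : ℝ) (hd₀ : 0 < d₀)
    (hsep : ∀ a ∈ A, ∀ b ∈ B, d₀ ≤ dist a b) :
    ∀ x : EuclideanSpace ℝ (Fin n),
      Metric.infDist x A = Metric.infDist x B →
      ∀ t ∈ A ∪ B, d₀ / 2 ≤ dist x t :=
  stmt_10_general A B hAne hBne d₀ hsep
end
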